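/- Let w_t = w_{t-1} + ε_t with E[ε_t] = 0, Var(ε_t) = Q, and scalar observation z_t = h(w_t) + ν_t with E[ν_t] = 0, Var(ν_t) = R, ε_t and ν_t uncorrelated with each other and with the prior error e_{t-1} = w_{t-1} - μ_{t-1}. Linearize h so that h(w_t) - h(μ_{t-1}) = H (w_t - μ_{t-1}) for a row vector H. Define μ_t = μ_{t-1} + a K (z_t - h(μ_{t-1})) with K = Σ* Hᵀ (H Σ* Hᵀ + R)^{-1} and Σ* = Σ_{t-1} + Q. Then the posterior error covariance satisfies E[(w_t - μ_t)(w_t - μ_t)ᵀ] = Σ* + a(a-2) K H Σ*. -/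

import Mathlib

open Matrix MeasureTheory

attribute [local instance] Matrix.normedAddCommGroup Matrix.normedSpace

/-!
With the predicted error `e = (w_{t-1} - μ_{t-1}) + ε` and the innovation `y = H e + ν`, the
posterior error is `e - a y K`. Its second moment expands to
`Σ* - a (Σ* Hᵀ Kᵀ + K H Σ*) + a² (H Σ* Hᵀ + R) K Kᵀ`: the cross moments vanish by
uncorrelatedness, so `E[e eᵀ] = Σ*`, `E[y e] = Σ* Hᵀ` and `E[y²] = H Σ* Hᵀ + R`. The gain identity
`(H Σ* Hᵀ + R) K = Σ* Hᵀ` and the symmetry of `Σ*` turn all three correction terms into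
multiples of `K H Σ*`, with total coefficient `a² - 2a`.
-/

namespace LinearMap

variable {Ω E F : Type*} [MeasurableSpace Ω] {μ : Measure Ω}
  [NormedAddCommGroup E] [NormedSpace ℝ E] [FiniteDimensional ℝ E]
  [NormedAddCommGroup F] [NormedSpace ℝ F] {f : Ω → E}

theorem integrable_comp (L : E →ₗ[ℝ] F) (hf : Integrable f μ) :
    Integrable (fun ω => L (f ω)) μ :=
  L.toContinuousLinearMap.integrable_comp hf

theorem integral_comp_comm [CompleteSpace F] (L : E →ₗ[ℝ] F) (hf : Integrable f μ) :
    ∫ ω, L (f ω) ∂μ = L (∫ ω, f ω ∂μ) :=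
  L.toContinuousLinearMap.integral_comp_comm hf

variable {G : Type*} [AddCommGroup G] [Module ℝ G] {x y : Ω → G}

theorem integrable_apply_add_self (B : G →ₗ[ℝ] G →ₗ[ℝ] F)
    (hxx : Integrable (fun ω => B (x ω) (x ω)) μ) (hxy : Integrable (fun ω => B (x ω) (y ω)) μ)
    (hyx : Integrable (fun ω => B (y ω) (x ω)) μ) (hyy : Integrable (fun ω => B (y ω) (y ω)) μ) :
    Integrable (fun ω => B (x ω + y ω) (x ω + y ω)) μ := by
  simp only [map_add, add_apply]
  exact (hxx.fun_add hyx).fun_add (hxy.fun_add hyy)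

theorem integral_apply_add_self_of_cross_eq_zero (B : G →ₗ[ℝ] G →ₗ[ℝ] F)
    (hxx : Integrable (fun ω => B (x ω) (x ω)) μ) (hxy : Integrable (fun ω => B (x ω) (y ω)) μ)
    (hyx : Integrable (fun ω => B (y ω) (x ω)) μ) (hyy : Integrable (fun ω => B (y ω) (y ω)) μ)
    (hxy0 : ∫ ω, B (x ω) (y ω) ∂μ = 0) (hyx0 : ∫ ω, B (y ω) (x ω) ∂μ = 0) :
    ∫ ω, B (x ω + y ω) (x ω + y ω) ∂μ = ∫ ω, B (x ω) (x ω) ∂μ + ∫ ω, B (y ω) (y ω) ∂μ := by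
  simp only [map_add, add_apply]
  rw [integral_add (hxx.fun_add hyx) (hxy.fun_add hyy), integral_add hxx hyx,
    integral_add hxy hyy, hxy0, hyx0, add_zero, zero_add]

end LinearMap

section KalmanUpdate

variable {Ω ι : Type*} [MeasurableSpace Ω] {μ : Measure Ω}

theorem vecMulVec_sub_smul_self (x K : ι → ℝ) (a y : ℝ) :
    vecMulVec (x - (a * y) • K) (x - (a * y) • K)
      = vecMulVec x x - a • (vecMulVec (y • x) K + vecMulVec K (y • x))
        + (a ^ 2 * y ^ 2) • vecMulVec K K := by
  ext i j
  simp only [vecMulVec_apply, Matrix.sub_apply, Matrix.add_apply, Matrix.smul_apply,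
    Pi.sub_apply, Pi.smul_apply, smul_eq_mul]
  ring

variable [Fintype ι]

theorem smul_self_eq_vecMulVec_mulVec_add (H x : ι → ℝ) (r : ℝ) :
    (H ⬝ᵥ x + r) • x = vecMulVec x x *ᵥ H + r • x := by
  rw [vecMulVec_mulVec, op_smul_eq_smul, add_smul, dotProduct_comm]

theorem sq_eq_dotProduct_smul_add (H x : ι → ℝ) (r : ℝ) :
    (H ⬝ᵥ x + r) ^ 2 = H ⬝ᵥ ((H ⬝ᵥ x + r) • x) + H ⬝ᵥ (r • x) + r ^ 2 := by
  rw [dotProduct_smul, dotProduct_smul, smul_eq_mul, smul_eq_mul]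
  ring

/-- The left-hand side is the error covariance for an arbitrary gain `K`. -/
theorem covariance_update_of_kalman_gain {S : Matrix ι ι ℝ} (hS : S.IsSymm) {H K : ι → ℝ}
    {R : ℝ} (hK : (H ⬝ᵥ S *ᵥ H + R) • K = S *ᵥ H) (a : ℝ) :
    S - a • (vecMulVec (S *ᵥ H) K + vecMulVec K (S *ᵥ H))
        + (a ^ 2 * (H ⬝ᵥ S *ᵥ H + R)) • vecMulVec K K
      = S + (a * (a - 2)) • (vecMulVec K H * S) := by
  set d := H ⬝ᵥ S *ᵥ H + R
  rw [vecMulVec_mul, ← mulVec_transpose, hS.eq, ← hK, smul_vecMulVec, vecMulVec_smul]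
  module

theorem MeasureTheory.Integrable.const_dotProduct {f : Ω → ι → ℝ} (hf : Integrable f μ)
    (v : ι → ℝ) : Integrable (fun ω => v ⬝ᵥ f ω) μ :=
  LinearMap.integrable_comp (dotProductBilin ℝ ℝ v) hf

theorem integral_const_dotProduct (v : ι → ℝ) {f : Ω → ι → ℝ} (hf : Integrable f μ) :
    ∫ ω, v ⬝ᵥ f ω ∂μ = v ⬝ᵥ ∫ ω, f ω ∂μ :=
  LinearMap.integral_comp_comm (dotProductBilin ℝ ℝ v) hf

-- `Integrable` cannot synthesize `ContinuousENorm (Matrix ι ι ℝ)` from the local normed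
-- instance (its topology differs from `Matrix.topologicalSpace` up to unfolding), so the
-- instance is given explicitly, as in the statement of the theorem.
theorem isSymm_integral_vecMulVec_self {x : Ω → ι → ℝ}
    (hx : @Integrable _ _ SeminormedAddGroup.toContinuousENorm _ _
      (fun ω => vecMulVec (x ω) (x ω)) μ) :
    (∫ ω, vecMulVec (x ω) (x ω) ∂μ).IsSymm := by
  have h : ∫ ω, (vecMulVec (x ω) (x ω))ᵀ ∂μ = (∫ ω, vecMulVec (x ω) (x ω) ∂μ)ᵀ :=
    LinearMap.integral_comp_comm (transposeLinearEquiv ι ι ℝ ℝ).toLinearMap hx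
  unfold IsSymm
  simpa only [transpose_vecMulVec] using h.symm

section Innovation

variable {e : Ω → ι → ℝ} {ν : Ω → ℝ} {S : Matrix ι ι ℝ} {R : ℝ} (H : ι → ℝ)

theorem integrable_innovation_smul
    (hee : @Integrable _ _ SeminormedAddGroup.toContinuousENorm _ _
      (fun ω => vecMulVec (e ω) (e ω)) μ)
    (hνe : Integrable (fun ω => ν ω • e ω) μ) :
    Integrable (fun ω => (H ⬝ᵥ e ω + ν ω) • e ω) μ := by
  simp_rw [smul_self_eq_vecMulVec_mulVec_add]
  exact (LinearMap.integrable_comp ((mulVecBilin ℝ ℝ).flip H) hee).add hνe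

theorem integral_innovation_smul
    (hee : @Integrable _ _ SeminormedAddGroup.toContinuousENorm _ _
      (fun ω => vecMulVec (e ω) (e ω)) μ)
    (hνe : Integrable (fun ω => ν ω • e ω) μ)
    (hS : ∫ ω, vecMulVec (e ω) (e ω) ∂μ = S) (hνe0 : ∫ ω, ν ω • e ω ∂μ = 0) :
    ∫ ω, (H ⬝ᵥ e ω + ν ω) • e ω ∂μ = S *ᵥ H := by
  have heeH := LinearMap.integrable_comp ((mulVecBilin ℝ ℝ).flip H) hee
  have hcomm := LinearMap.integral_comp_comm ((mulVecBilin ℝ ℝ).flip H) hee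
  simp only [LinearMap.flip_apply, mulVecBilin_apply] at heeH hcomm
  simp_rw [smul_self_eq_vecMulVec_mulVec_add]
  rw [integral_add heeH hνe, hcomm, hS, hνe0, add_zero]

theorem integrable_innovation_sq
    (hee : @Integrable _ _ SeminormedAddGroup.toContinuousENorm _ _
      (fun ω => vecMulVec (e ω) (e ω)) μ)
    (hνe : Integrable (fun ω => ν ω • e ω) μ) (hνν : Integrable (fun ω => ν ω ^ 2) μ) :
    Integrable (fun ω => (H ⬝ᵥ e ω + ν ω) ^ 2) μ := by
  simp_rw [sq_eq_dotProduct_smul_add H (e _)]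
  exact (((integrable_innovation_smul H hee hνe).const_dotProduct H).add
    (hνe.const_dotProduct H)).add hνν

theorem integral_innovation_sq
    (hee : @Integrable _ _ SeminormedAddGroup.toContinuousENorm _ _
      (fun ω => vecMulVec (e ω) (e ω)) μ)
    (hνe : Integrable (fun ω => ν ω • e ω) μ) (hνν : Integrable (fun ω => ν ω ^ 2) μ)
    (hS : ∫ ω, vecMulVec (e ω) (e ω) ∂μ = S) (hνe0 : ∫ ω, ν ω • e ω ∂μ = 0)
    (hR : ∫ ω, ν ω ^ 2 ∂μ = R) :
    ∫ ω, (H ⬝ᵥ e ω + ν ω) ^ 2 ∂μ = H ⬝ᵥ S *ᵥ H + R := by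
  have hy := integrable_innovation_smul H hee hνe
  simp_rw [sq_eq_dotProduct_smul_add H (e _)]
  rw [integral_add ((hy.const_dotProduct H).fun_add (hνe.const_dotProduct H)) hνν,
    integral_add (hy.const_dotProduct H) (hνe.const_dotProduct H),
    integral_const_dotProduct H hy, integral_const_dotProduct H hνe,
    integral_innovation_smul H hee hνe hS hνe0, hνe0, hR, dotProduct_zero, add_zero]

theorem integral_vecMulVec_sub_smul_innovation
    (hee : @Integrable _ _ SeminormedAddGroup.toContinuousENorm _ _
      (fun ω => vecMulVec (e ω) (e ω)) μ)
    (hνe : Integrable (fun ω => ν ω • e ω) μ) (hνν : Integrable (fun ω => ν ω ^ 2) μ)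
    (hS : ∫ ω, vecMulVec (e ω) (e ω) ∂μ = S) (hνe0 : ∫ ω, ν ω • e ω ∂μ = 0)
    (hR : ∫ ω, ν ω ^ 2 ∂μ = R) (K : ι → ℝ) (a : ℝ) :
    ∫ ω, vecMulVec (e ω - (a * (H ⬝ᵥ e ω + ν ω)) • K) (e ω - (a * (H ⬝ᵥ e ω + ν ω)) • K) ∂μ
      = S - a • (vecMulVec (S *ᵥ H) K + vecMulVec K (S *ᵥ H))
        + (a ^ 2 * (H ⬝ᵥ S *ᵥ H + R)) • vecMulVec K K := by
  have hy := integrable_innovation_smul H hee hνe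
  have hyK := LinearMap.integrable_comp ((vecMulVecBilin ℝ ℝ).flip K) hy
  have hKy := LinearMap.integrable_comp (vecMulVecBilin ℝ ℝ K) hy
  have hyK_comm := LinearMap.integral_comp_comm ((vecMulVecBilin ℝ ℝ).flip K) hy
  have hKy_comm := LinearMap.integral_comp_comm (vecMulVecBilin ℝ ℝ K) hy
  simp only [LinearMap.flip_apply, vecMulVecBilin_apply_apply] at hyK hKy hyK_comm hKy_comm
  have hcross := (hyK.fun_add hKy).fun_smul a
  have hy2 := (integrable_innovation_sq H hee hνe hνν).const_mul (a ^ 2)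
  simp_rw [vecMulVec_sub_smul_self]
  rw [integral_add (hee.sub' hcross) (hy2.smul_const _), integral_sub hee hcross,
    integral_smul, integral_add hyK hKy, hyK_comm, hKy_comm, integral_smul_const,
    integral_const_mul, integral_innovation_smul H hee hνe hS hνe0,
    integral_innovation_sq H hee hνe hνν hS hνe0 hR, hS]

end Innovation

end KalmanUpdate

theorem stmt_6_general {k : ℕ} {Ω : Type*} [MeasurableSpace Ω]
    (μ : Measure Ω)
    (wprev : Ω → Fin k → ℝ) (ε : Ω → Fin k → ℝ) (ν : Ω → ℝ)
    (μprev : Fin k → ℝ) (Q Sprev : Matrix (Fin k) (Fin k) ℝ) (R : ℝ)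
    (H : Fin k → ℝ) (hfun : (Fin k → ℝ) → ℝ) (a : ℝ)
    -- covariances
    (hQ : ∫ ω, vecMulVec (ε ω) (ε ω) ∂μ = Q)
    (hR : ∫ ω, (ν ω) ^ 2 ∂μ = R)
    (hSprev : ∫ ω, vecMulVec (wprev ω - μprev) (wprev ω - μprev) ∂μ = Sprev)
    -- uncorrelatedness of ε, ν and the prior error e = wprev - μprev
    (hεe : ∫ ω, vecMulVec (ε ω) (wprev ω - μprev) ∂μ = 0)
    (heε : ∫ ω, vecMulVec (wprev ω - μprev) (ε ω) ∂μ = 0)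
    (hνε : ∫ ω, (ν ω) • ε ω ∂μ = 0)
    (hνe : ∫ ω, (ν ω) • (wprev ω - μprev) ∂μ = 0)
    -- integrability of all the second-moment quantities involved
    (int1 : @Integrable _ _ SeminormedAddGroup.toContinuousENorm _ _ (fun ω => vecMulVec (ε ω) (ε ω)) μ)
    (int2 : @Integrable _ _ SeminormedAddGroup.toContinuousENorm _ _ (fun ω => vecMulVec (wprev ω - μprev) (wprev ω - μprev)) μ)
    (int3 : @Integrable _ _ SeminormedAddGroup.toContinuousENorm _ _ (fun ω => vecMulVec (ε ω) (wprev ω - μprev)) μ)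
    (int4 : @Integrable _ _ SeminormedAddGroup.toContinuousENorm _ _ (fun ω => vecMulVec (wprev ω - μprev) (ε ω)) μ)
    (int5 : Integrable (fun ω => (ν ω) ^ 2) μ)
    (int6 : Integrable (fun ω => (ν ω) • ε ω) μ)
    (int7 : Integrable (fun ω => (ν ω) • (wprev ω - μprev)) μ)
    -- linearization of the observation function around μprev
    (hlin : ∀ ω, hfun (wprev ω + ε ω) - hfun μprev
      = H ⬝ᵥ (wprev ω + ε ω - μprev))
    -- denominator of the Kalman gain is nonzero
    (hden : H ⬝ᵥ (Sprev + Q).mulVec H + R ≠ 0) :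
    -- posterior error covariance of the forgetting update
    (∫ ω, vecMulVec
        ((wprev ω + ε ω) -
          (μprev + (a * ((hfun (wprev ω + ε ω) + ν ω) - hfun μprev)) •
            ((H ⬝ᵥ (Sprev + Q).mulVec H + R)⁻¹ • (Sprev + Q).mulVec H)))
        ((wprev ω + ε ω) -
          (μprev + (a * ((hfun (wprev ω + ε ω) + ν ω) - hfun μprev)) •
            ((H ⬝ᵥ (Sprev + Q).mulVec H + R)⁻¹ • (Sprev + Q).mulVec H))) ∂μ)
      = (Sprev + Q) + (a * (a - 2)) •
          (vecMulVec ((H ⬝ᵥ (Sprev + Q).mulVec H + R)⁻¹ • (Sprev + Q).mulVec H) H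
            * (Sprev + Q)) := by
  set S := Sprev + Q
  set K := (H ⬝ᵥ S *ᵥ H + R)⁻¹ • S *ᵥ H
  set e : Ω → Fin k → ℝ := fun ω => wprev ω - μprev + ε ω
  have hee := LinearMap.integrable_apply_add_self (x := fun ω => wprev ω - μprev) (y := ε)
    (vecMulVecBilin ℝ ℝ) int2 int4 int3 int1
  have hS : ∫ ω, vecMulVec (e ω) (e ω) ∂μ = S := by
    have h := LinearMap.integral_apply_add_self_of_cross_eq_zero
      (x := fun ω => wprev ω - μprev) (y := ε) (vecMulVecBilin ℝ ℝ) int2 int4 int3 int1 heε hεe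
    simp only [vecMulVecBilin_apply_apply] at h
    rw [h, hSprev, hQ]
  have hνe_int : Integrable (fun ω => ν ω • e ω) μ := by
    simp only [e, smul_add]
    exact int7.fun_add int6
  have hνe_zero : ∫ ω, ν ω • e ω ∂μ = 0 := by
    simp only [e, smul_add]
    rw [integral_add int7 int6, hνe, hνε, add_zero]
  have hpost : ∀ ω, (wprev ω + ε ω) -
      (μprev + (a * ((hfun (wprev ω + ε ω) + ν ω) - hfun μprev)) • K)
        = e ω - (a * (H ⬝ᵥ e ω + ν ω)) • K := by
    intro ω
    have hinnov : hfun (wprev ω + ε ω) + ν ω - hfun μprev = H ⬝ᵥ e ω + ν ω := by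
      rw [add_sub_right_comm, hlin ω, add_sub_right_comm]
    rw [hinnov]
    simp only [e]
    abel
  simp_rw [hpost]
  rw [integral_vecMulVec_sub_smul_innovation H hee hνe_int int5 hS hνe_zero hR K a]
  exact covariance_update_of_kalman_gain (hS ▸ isSymm_integral_vecMulVec_self hee)
    (smul_inv_smul₀ hden _) a

/-- EKF with forgetting: with state evolution `w_t = w_{t-1} + ε`, scalar
observation `z = h(w_t) + ν`, linearization `h(w) - h(μ_{t-1}) = H ⬝ (w - μ_{t-1})`,
prior error covariance `Σ_{t-1}`, state noise covariance `Q`, observation noise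
variance `R`, Kalman gain `K = Σ* Hᵀ (H Σ* Hᵀ + R)⁻¹` with `Σ* = Σ_{t-1} + Q`,
and mean update `μ_t = μ_{t-1} + a K (z - h(μ_{t-1}))`, the posterior error
covariance is `Σ* + a(a-2) K H Σ*`. -/
theorem stmt_6 {k : ℕ} {Ω : Type*} [MeasurableSpace Ω]
    (μ : Measure Ω) [IsProbabilityMeasure μ]
    (wprev : Ω → Fin k → ℝ) (ε : Ω → Fin k → ℝ) (ν : Ω → ℝ)
    (μprev : Fin k → ℝ) (Q Sprev : Matrix (Fin k) (Fin k) ℝ) (R : ℝ)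
    (H : Fin k → ℝ) (hfun : (Fin k → ℝ) → ℝ) (a : ℝ)
    -- zero means
    (hε0 : ∫ ω, ε ω ∂μ = 0) (hν0 : ∫ ω, ν ω ∂μ = 0)
    -- covariances
    (hQ : ∫ ω, vecMulVec (ε ω) (ε ω) ∂μ = Q)
    (hR : ∫ ω, (ν ω) ^ 2 ∂μ = R)
    (hSprev : ∫ ω, vecMulVec (wprev ω - μprev) (wprev ω - μprev) ∂μ = Sprev)
    -- uncorrelatedness of ε, ν and the prior error e = wprev - μprev
    (hεe : ∫ ω, vecMulVec (ε ω) (wprev ω - μprev) ∂μ = 0)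
    (heε : ∫ ω, vecMulVec (wprev ω - μprev) (ε ω) ∂μ = 0)
    (hνε : ∫ ω, (ν ω) • ε ω ∂μ = 0)
    (hνe : ∫ ω, (ν ω) • (wprev ω - μprev) ∂μ = 0)
    -- integrability of all the second-moment quantities involved
    (int1 : @Integrable _ _ SeminormedAddGroup.toContinuousENorm _ _ (fun ω => vecMulVec (ε ω) (ε ω)) μ)
    (int2 : @Integrable _ _ SeminormedAddGroup.toContinuousENorm _ _ (fun ω => vecMulVec (wprev ω - μprev) (wprev ω - μprev)) μ)
    (int3 : @Integrable _ _ SeminormedAddGroup.toContinuousENorm _ _ (fun ω => vecMulVec (ε ω) (wprev ω - μprev)) μ)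
    (int4 : @Integrable _ _ SeminormedAddGroup.toContinuousENorm _ _ (fun ω => vecMulVec (wprev ω - μprev) (ε ω)) μ)
    (int5 : Integrable (fun ω => (ν ω) ^ 2) μ)
    (int6 : Integrable (fun ω => (ν ω) • ε ω) μ)
    (int7 : Integrable (fun ω => (ν ω) • (wprev ω - μprev)) μ)
    -- linearization of the observation function around μprev
    (hlin : ∀ ω, hfun (wprev ω + ε ω) - hfun μprev
      = H ⬝ᵥ (wprev ω + ε ω - μprev))
    -- denominator of the Kalman gain is nonzero
    (hden : H ⬝ᵥ (Sprev + Q).mulVec H + R ≠ 0) :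
    -- posterior error covariance of the forgetting update
    (∫ ω, vecMulVec
        ((wprev ω + ε ω) -
          (μprev + (a * ((hfun (wprev ω + ε ω) + ν ω) - hfun μprev)) •
            ((H ⬝ᵥ (Sprev + Q).mulVec H + R)⁻¹ • (Sprev + Q).mulVec H)))
        ((wprev ω + ε ω) -
          (μprev + (a * ((hfun (wprev ω + ε ω) + ν ω) - hfun μprev)) •
            ((H ⬝ᵥ (Sprev + Q).mulVec H + R)⁻¹ • (Sprev + Q).mulVec H))) ∂μ)
      = (Sprev + Q) + (a * (a - 2)) •
          (vecMulVec ((H ⬝ᵥ (Sprev + Q).mulVec H + R)⁻¹ • (Sprev + Q).mulVec H) H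
            * (Sprev + Q)) :=
  stmt_6_general μ wprev ε ν μprev Q Sprev R H hfun a hQ hR hSprev hεe heε hνε hνe int1 int2 int3
    int4 int5 int6 int7 hlin hden
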